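/- arXiv:2103.02675 — 3 statements merged into one kernel-verified Lean document; each statement's English description precedes it below -/
import Mathlib

section
/- For 0 < τ < 1/3 and real ξ, the equation (1 + τξ²)·sinh(ξ) = ξ·cosh(ξ) (equivalently m_τ(ξ) = 1) has exactly three real solutions: ξ = 0 and ξ = ±k₀ for a unique k₀ > 0. -/
/-!
For `ξ > 0` the equation says `τ = φ ξ` with `φ ξ = (ξ cosh ξ - sinh ξ) / (ξ² sinh ξ)`. The
derivative of `φ` has the sign of `2 sinh² ξ - ξ² - ξ sinh ξ cosh ξ`, which is negative because
`4 cosh u < u² + u sinh u + 4` at `u = 2ξ`; that inequality ends a chain of four, each obtained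
from the previous one as a bound on the derivative of the difference, which vanishes at `0`.
So `φ` is strictly decreasing on `(0, ∞)`, and since `1 / (3 cosh ξ) < φ ξ < 1 / ξ`, it takes
every value in `(0, 1/3)` exactly once. The equation is odd in `ξ`, which gives the roots `0`
and `-k₀`.
-/

open Real Set Filter Topology

theorem pos_of_hasDerivAt_of_deriv_pos {f f' : ℝ → ℝ} (hf : ∀ x, HasDerivAt f (f' x) x)
    (hf0 : f 0 = 0) (hf' : ∀ x, 0 < x → 0 < f' x) {x : ℝ} (hx : 0 < x) : 0 < f x := by
  have hmono : StrictMonoOn f (Ici 0) :=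
    strictMonoOn_of_hasDerivWithinAt_pos (convex_Ici 0)
      (fun y _ => (hf y).continuousAt.continuousWithinAt)
      (fun y _ => (hf y).hasDerivWithinAt) (by simpa using hf')
  simpa [hf0] using hmono self_mem_Ici hx.le hx

section Hyperbolic

variable {x : ℝ}

theorem sinh_lt_mul_cosh (hx : 0 < x) : sinh x < x * cosh x := by
  have := pos_of_hasDerivAt_of_deriv_pos (f := fun t => t * cosh t - sinh t)
    (f' := fun t => t * sinh t)
    (fun t =>
      (((hasDerivAt_id' t).mul (hasDerivAt_cosh t)).sub (hasDerivAt_sinh t)).congr_deriv (by ring))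
    (by simp) (fun t ht => mul_pos ht (sinh_pos_iff.2 ht)) hx
  linarith

theorem cube_div_three_lt_mul_cosh_sub_sinh (hx : 0 < x) : x ^ 3 / 3 < x * cosh x - sinh x := by
  have := pos_of_hasDerivAt_of_deriv_pos (f := fun t => t * cosh t - sinh t - t ^ 3 / 3)
    (f' := fun t => t * (sinh t - t))
    (fun t =>
      ((((hasDerivAt_id' t).mul (hasDerivAt_cosh t)).sub (hasDerivAt_sinh t)).sub
        ((hasDerivAt_pow 3 t).div_const 3)).congr_deriv (by ring))
    (by simp) (fun t ht => mul_pos ht (sub_pos.2 (self_lt_sinh_iff.2 ht))) hx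
  linarith

theorem two_mul_cosh_lt (hx : 0 < x) : 2 * cosh x < 2 + x * sinh x := by
  have := pos_of_hasDerivAt_of_deriv_pos (f := fun t => 2 + t * sinh t - 2 * cosh t)
    (f' := fun t => t * cosh t - sinh t)
    (fun t =>
      ((((hasDerivAt_id' t).mul (hasDerivAt_sinh t)).const_add 2).sub
        ((hasDerivAt_cosh t).const_mul 2)).congr_deriv (by ring))
    (by simp) (fun t ht => by linarith [sinh_lt_mul_cosh ht]) hx
  linarith

theorem three_mul_sinh_lt (hx : 0 < x) : 3 * sinh x < 2 * x + x * cosh x := by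
  have := pos_of_hasDerivAt_of_deriv_pos (f := fun t => 2 * t + t * cosh t - 3 * sinh t)
    (f' := fun t => 2 + t * sinh t - 2 * cosh t)
    (fun t =>
      ((((hasDerivAt_id' t).const_mul 2).add ((hasDerivAt_id' t).mul (hasDerivAt_cosh t))).sub
        ((hasDerivAt_sinh t).const_mul 3)).congr_deriv (by ring))
    (by simp) (fun t ht => by linarith [two_mul_cosh_lt ht]) hx
  linarith

theorem four_mul_cosh_lt (hx : 0 < x) : 4 * cosh x < x ^ 2 + x * sinh x + 4 := by
  have := pos_of_hasDerivAt_of_deriv_pos (f := fun t => t ^ 2 + t * sinh t + 4 - 4 * cosh t)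
    (f' := fun t => 2 * t + t * cosh t - 3 * sinh t)
    (fun t =>
      (((((hasDerivAt_pow 2 t).add ((hasDerivAt_id' t).mul (hasDerivAt_sinh t))).add_const 4).sub
        ((hasDerivAt_cosh t).const_mul 4))).congr_deriv (by ring))
    (by simp) (fun t ht => by linarith [three_mul_sinh_lt ht]) hx
  linarith

theorem two_mul_sinh_sq_lt (hx : 0 < x) : 2 * sinh x ^ 2 < x ^ 2 + x * sinh x * cosh x := by
  have h := four_mul_cosh_lt (mul_pos two_pos hx)
  rw [cosh_two_mul, sinh_two_mul] at h
  nlinarith [cosh_sq x]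

end Hyperbolic

theorem Function.Odd.setOf_eq_zero {α β : Type*} [AddCommGroup α] [LinearOrder α]
    [IsOrderedAddMonoid α] [AddCommGroup β] [IsAddTorsionFree β] {f : α → β} (hf : f.Odd)
    {k : α} (hk : 0 < k) (hpos : ∀ x, 0 < x → (f x = 0 ↔ x = k)) :
    {x | f x = 0} = {0, k, -k} := by
  ext x
  simp only [mem_ofPred_eq, mem_insert_iff, mem_singleton_iff]
  rcases lt_trichotomy x 0 with hx | rfl | hx
  · rw [← neg_eq_zero, ← hf, hpos (-x) (neg_pos.2 hx), neg_eq_iff_eq_neg]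
    simp [hx.ne, (hx.trans hk).ne]
  · simp [hf.map_zero]
  · rw [hpos x hx]
    simp [hx.ne', ((neg_neg_of_pos hk).trans hx).ne']

noncomputable def dispersionRatio (ξ : ℝ) : ℝ := (ξ * cosh ξ - sinh ξ) / (ξ ^ 2 * sinh ξ)

section DispersionRatio

variable {ξ : ℝ}

theorem dispersion_eq_iff_dispersionRatio_eq {τ : ℝ} (hξ : 0 < ξ) :
    (1 + τ * ξ ^ 2) * sinh ξ = ξ * cosh ξ ↔ dispersionRatio ξ = τ := by
  have hden : 0 < ξ ^ 2 * sinh ξ := by have := sinh_pos_iff.2 hξ; positivity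
  rw [dispersionRatio, div_eq_iff hden.ne']
  constructor <;> intro h <;> linarith

theorem continuousOn_dispersionRatio : ContinuousOn dispersionRatio (Ioi 0) :=
  ContinuousOn.div (by fun_prop) (by fun_prop) fun ξ hξ => by
    have : 0 < ξ := hξ
    positivity

theorem hasDerivAt_dispersionRatio (hξ : ξ ≠ 0) :
    HasDerivAt dispersionRatio
      (-(ξ ^ 2 + ξ * sinh ξ * cosh ξ - 2 * sinh ξ ^ 2) / (ξ ^ 3 * sinh ξ ^ 2)) ξ := by
  have hnum : HasDerivAt (fun x => x * cosh x - sinh x) (ξ * sinh ξ) ξ :=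
    (((hasDerivAt_id' ξ).mul (hasDerivAt_cosh ξ)).sub (hasDerivAt_sinh ξ)).congr_deriv (by ring)
  have hden : HasDerivAt (fun x => x ^ 2 * sinh x) (2 * ξ * sinh ξ + ξ ^ 2 * cosh ξ) ξ :=
    ((hasDerivAt_pow 2 ξ).mul (hasDerivAt_sinh ξ)).congr_deriv (by ring)
  refine (hnum.div hden (by positivity)).congr_deriv ?_
  field_simp
  linear_combination (-ξ ^ 2) * cosh_sq ξ

theorem strictAntiOn_dispersionRatio : StrictAntiOn dispersionRatio (Ioi 0) := by
  refine strictAntiOn_of_deriv_neg (convex_Ioi 0) continuousOn_dispersionRatio fun ξ hξ => ?_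
  rw [interior_Ioi, mem_Ioi] at hξ
  rw [(hasDerivAt_dispersionRatio hξ.ne').deriv]
  exact div_neg_of_neg_of_pos (neg_neg_of_pos (by linarith [two_mul_sinh_sq_lt hξ]))
    (by positivity)

theorem inv_three_mul_cosh_lt_dispersionRatio (hξ : 0 < ξ) :
    (3 * cosh ξ)⁻¹ < dispersionRatio ξ := by
  have hs := sinh_pos_iff.2 hξ
  rw [dispersionRatio, lt_div_iff₀ (by positivity), inv_mul_lt_iff₀ (by positivity)]
  nlinarith [cube_div_three_lt_mul_cosh_sub_sinh hξ, sinh_lt_mul_cosh hξ, pow_pos hξ 2]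

theorem dispersionRatio_lt_inv (hξ : 0 < ξ) : dispersionRatio ξ < ξ⁻¹ := by
  have hs := sinh_pos_iff.2 hξ
  have : ξ * (cosh ξ - sinh ξ) < sinh ξ := by
    rw [cosh_sub_sinh]
    nlinarith [exp_le_one_iff.2 (neg_nonpos.2 hξ.le), self_lt_sinh_iff.2 hξ]
  rw [dispersionRatio, div_lt_iff₀ (by positivity)]
  field_simp
  linarith

theorem exists_lt_dispersionRatio {τ : ℝ} (hτ : τ < 1 / 3) :
    ∃ a, 0 < a ∧ τ < dispersionRatio a := by
  have hlim : ∀ᶠ a in 𝓝[>] 0, τ < (3 * cosh a)⁻¹ := by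
    have hcont : Continuous fun a : ℝ => (3 * cosh a)⁻¹ :=
      (continuous_const.mul continuous_cosh).inv₀ fun a => (mul_pos three_pos (cosh_pos a)).ne'
    refine nhdsWithin_le_nhds (hcont.continuousAt.tendsto.eventually_const_lt ?_)
    simpa using hτ
  obtain ⟨a, ha, ha0⟩ := (hlim.and self_mem_nhdsWithin).exists
  exact ⟨a, ha0, ha.trans (inv_three_mul_cosh_lt_dispersionRatio ha0)⟩

theorem existsUnique_dispersionRatio_eq {τ : ℝ} (hτ0 : 0 < τ) (hτ : τ < 1 / 3) :
    ∃! k, 0 < k ∧ dispersionRatio k = τ := by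
  obtain ⟨a, ha, hτa⟩ := exists_lt_dispersionRatio hτ
  have hb : dispersionRatio τ⁻¹ < τ := by
    simpa using dispersionRatio_lt_inv (inv_pos.2 hτ0)
  have hab : a < τ⁻¹ :=
    (strictAntiOn_dispersionRatio.lt_iff_gt (inv_pos.2 hτ0) ha).1 (hb.trans hτa)
  obtain ⟨k, hk, hkτ⟩ := intermediate_value_Icc' hab.le
    (continuousOn_dispersionRatio.mono fun x hx => ha.trans_le hx.1) ⟨hb.le, hτa.le⟩
  refine ⟨k, ⟨ha.trans_le hk.1, hkτ⟩, fun k' ⟨hk', hk'τ⟩ => ?_⟩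
  exact strictAntiOn_dispersionRatio.injOn hk' (ha.trans_le hk.1) (hk'τ.trans hkτ.symm)

end DispersionRatio

theorem dispersion_roots_weak_tension (τ : ℝ) (hτ0 : 0 < τ) (hτ : τ < 1/3) :
    ∃! k₀ : ℝ, 0 < k₀ ∧
      {ξ : ℝ | (1 + τ * ξ ^ 2) * Real.sinh ξ = ξ * Real.cosh ξ} = {0, k₀, -k₀} := by
  obtain ⟨k₀, ⟨hk₀, hk₀τ⟩, hunique⟩ := existsUnique_dispersionRatio_eq hτ0 hτ
  have hodd : Function.Odd fun ξ => (1 + τ * ξ ^ 2) * sinh ξ - ξ * cosh ξ := fun ξ => by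
    simp only [sinh_neg, cosh_neg]
    ring
  have hzeros : {ξ : ℝ | (1 + τ * ξ ^ 2) * sinh ξ = ξ * cosh ξ} = {0, k₀, -k₀} := by
    simpa only [sub_eq_zero] using hodd.setOf_eq_zero hk₀ fun ξ hξ => by
      rw [sub_eq_zero, dispersion_eq_iff_dispersionRatio_eq hξ]
      exact ⟨fun h => hunique ξ ⟨hξ, h⟩, fun h => h ▸ hk₀τ⟩
  refine ⟨k₀, ⟨hk₀, hzeros⟩, fun k ⟨hk, hzeros'⟩ => hunique k ⟨hk, ?_⟩⟩
  have hroot : k ∈ {ξ : ℝ | (1 + τ * ξ ^ 2) * sinh ξ = ξ * cosh ξ} := by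
    simp [hzeros']
  exact (dispersion_eq_iff_dispersionRatio_eq hk).1 hroot
end

section
/- For τ ≥ 1/3, the equation (1 + τξ²)·sinh(ξ) = ξ·cosh(ξ) has ξ = 0 as its only real solution; equivalently, m_τ(ξ) > 1 for all ξ ≠ 0. -/
noncomputable def mSq (τ ξ : ℝ) : ℝ :=
  (1 + τ * ξ ^ 2) * (if ξ = 0 then 1 else Real.tanh ξ / ξ)

noncomputable def mSymb (τ ξ : ℝ) : ℝ := Real.sqrt (mSq τ ξ)

/-!
The function `D(ξ) = (1 + τξ²) sinh ξ - ξ cosh ξ` is odd, and for `τ = 1/3` it is strictly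
increasing: its derivative is `ξ/3 · (ξ cosh ξ - sinh ξ)`, and `ξ cosh ξ - sinh ξ` is itself
strictly increasing, with derivative `ξ sinh ξ`. Hence `ξ · D(ξ) > 0` for `ξ ≠ 0`, and raising
`τ` adds the nonnegative term `(τ - 1/3) ξ³ sinh ξ`. Finally
`m_τ(ξ)² - 1 = D(ξ) / (ξ cosh ξ)`.
-/

open Real Set

lemma mul_pos_of_strictMono_of_map_zero {f : ℝ → ℝ} (hf : StrictMono f) (h0 : f 0 = 0)
    {x : ℝ} (hx : x ≠ 0) : 0 < x * f x := by
  rcases hx.lt_or_gt with hneg | hpos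
  · exact mul_pos_of_neg_of_neg hneg (h0 ▸ hf hneg)
  · exact mul_pos hpos (h0 ▸ hf hpos)

lemma strictMono_mul_cosh_sub_sinh : StrictMono fun x : ℝ => x * cosh x - sinh x := by
  refine strictMono_of_odd_strictMonoOn_nonneg
    (fun x => by simp only [cosh_neg, sinh_neg]; ring) ?_
  refine strictMonoOn_of_deriv_pos (convex_Ici 0) (by fun_prop) fun x hx => ?_
  rw [interior_Ici, mem_Ioi] at hx
  have hd : HasDerivAt (fun x : ℝ => x * cosh x - sinh x) (x * sinh x) x :=
    (((hasDerivAt_id x).mul (hasDerivAt_cosh x)).sub (hasDerivAt_sinh x)).congr_deriv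
      (by simp only [id_eq]; ring)
  rw [hd.deriv]
  exact mul_pos hx (sinh_pos_iff.2 hx)

lemma strictMono_one_add_sq_div_three_mul_sinh_sub_mul_cosh :
    StrictMono fun x : ℝ => (1 + x ^ 2 / 3) * sinh x - x * cosh x := by
  refine strictMono_of_odd_strictMonoOn_nonneg
    (fun x => by simp only [cosh_neg, sinh_neg, neg_sq]; ring) ?_
  refine strictMonoOn_of_deriv_pos (convex_Ici 0) (by fun_prop) fun x hx => ?_
  rw [interior_Ici, mem_Ioi] at hx
  have hd : HasDerivAt (fun x : ℝ => (1 + x ^ 2 / 3) * sinh x - x * cosh x)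
      (x / 3 * (x * cosh x - sinh x)) x :=
    ((((hasDerivAt_pow 2 x).div_const 3).const_add 1).mul (hasDerivAt_sinh x)).sub
      ((hasDerivAt_id x).mul (hasDerivAt_cosh x)) |>.congr_deriv (by simp only [id_eq]; ring)
  have hg : 0 < x * cosh x - sinh x := by
    simpa using strictMono_mul_cosh_sub_sinh hx
  rw [hd.deriv]
  exact mul_pos (by positivity) hg

lemma mul_one_add_mul_sq_mul_sinh_sub_mul_cosh_pos {τ ξ : ℝ} (hτ : 1 / 3 ≤ τ) (hξ : ξ ≠ 0) :
    0 < ξ * ((1 + τ * ξ ^ 2) * sinh ξ - ξ * cosh ξ) := by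
  have hcrit := mul_pos_of_strictMono_of_map_zero
    strictMono_one_add_sq_div_three_mul_sinh_sub_mul_cosh (by simp) hξ
  have hsinh := (mul_pos_of_strictMono_of_map_zero sinh_strictMono sinh_zero hξ).le
  have hextra : 0 ≤ (τ - 1 / 3) * ξ ^ 2 * (ξ * sinh ξ) := by
    have : 0 ≤ τ - 1 / 3 := by linarith
    positivity
  calc 0 < ξ * ((1 + ξ ^ 2 / 3) * sinh ξ - ξ * cosh ξ)
        + (τ - 1 / 3) * ξ ^ 2 * (ξ * sinh ξ) := by linarith
    _ = ξ * ((1 + τ * ξ ^ 2) * sinh ξ - ξ * cosh ξ) := by ring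

lemma mSq_sub_one {τ ξ : ℝ} (hξ : ξ ≠ 0) :
    mSq τ ξ - 1 = ξ * ((1 + τ * ξ ^ 2) * sinh ξ - ξ * cosh ξ) / (ξ ^ 2 * cosh ξ) := by
  have hc : cosh ξ ≠ 0 := (cosh_pos ξ).ne'
  rw [mSq, if_neg hξ, tanh_eq_sinh_div_cosh]
  field_simp

lemma one_lt_mSq {τ ξ : ℝ} (hτ : 1 / 3 ≤ τ) (hξ : ξ ≠ 0) : 1 < mSq τ ξ := by
  have h := mSq_sub_one (τ := τ) hξ
  have hpos : 0 < mSq τ ξ - 1 := by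
    rw [h]
    exact div_pos (mul_one_add_mul_sq_mul_sinh_sub_mul_cosh_pos hτ hξ)
      (by positivity)
  linarith

theorem dispersion_roots_strong_tension (τ : ℝ) (hτ : 1/3 ≤ τ) :
    ({ξ : ℝ | (1 + τ * ξ ^ 2) * Real.sinh ξ = ξ * Real.cosh ξ} = {0}) ∧
    (∀ ξ : ℝ, ξ ≠ 0 → 1 < mSymb τ ξ) := by
  refine ⟨Set.eq_singleton_iff_unique_mem.2 ⟨by simp, fun ξ hroot => ?_⟩, fun ξ hξ => ?_⟩
  · by_contra hξ
    have h := mul_one_add_mul_sq_mul_sinh_sub_mul_cosh_pos hτ hξ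
    rw [sub_eq_zero.2 hroot, mul_zero] at h
    exact h.false
  · rw [mSymb, lt_sqrt zero_le_one, one_pow]
    exact one_lt_mSq hτ hξ
end

section
/- Fix s > 0 and define c₀ and τ₀ by c₀² = (s²/(2 sinh²(s)) + s/(2 tanh(s)))^(-1), τ₀ = c₀²(-1/(2 sinh²(s)) + 1/(2 s tanh(s))). Then the function f(ξ) = c₀^(-2)(1 + τ₀ξ²)·sinh(ξ) - ξ·cosh(ξ) satisfies f(s) = 0 and f'(s) = 0, i.e., s is a double zero of f. -/
theorem curve_C2_double_root (s : ℝ) (hs : 0 < s)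
    (c0sq : ℝ) (hc0 : c0sq = (s ^ 2 / (2 * Real.sinh s ^ 2) + s / (2 * Real.tanh s))⁻¹)
    (τ₀ : ℝ) (hτ₀ : τ₀ = c0sq * (-(1 / (2 * Real.sinh s ^ 2)) + 1 / (2 * s * Real.tanh s))) :
    (fun ξ : ℝ => c0sq⁻¹ * (1 + τ₀ * ξ ^ 2) * Real.sinh ξ - ξ * Real.cosh ξ) s = 0 ∧
    deriv (fun ξ : ℝ => c0sq⁻¹ * (1 + τ₀ * ξ ^ 2) * Real.sinh ξ - ξ * Real.cosh ξ) s = 0 := by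
  have hsinh : 0 < Real.sinh s := Real.sinh_pos_iff.mpr hs
  have hcosh : 0 < Real.cosh s := Real.cosh_pos s
  have htanh : Real.tanh s = Real.sinh s / Real.cosh s := Real.tanh_eq_sinh_div_cosh s
  have htpos : 0 < Real.tanh s := by rw [htanh]; positivity
  have hApos : 0 < s ^ 2 / (2 * Real.sinh s ^ 2) + s / (2 * Real.tanh s) := by positivity
  have hcinv : c0sq⁻¹ = s ^ 2 / (2 * Real.sinh s ^ 2) + s / (2 * Real.tanh s) := by
    rw [hc0, inv_inv]
  have hc0ne : c0sq ≠ 0 := by rw [hc0]; exact inv_ne_zero hApos.ne'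
  have hB : c0sq⁻¹ * τ₀ = -(1 / (2 * Real.sinh s ^ 2)) + 1 / (2 * s * Real.tanh s) := by
    rw [hτ₀]; field_simp
  have hid : Real.cosh s ^ 2 - Real.sinh s ^ 2 = 1 := Real.cosh_sq_sub_sinh_sq s
  -- key: c0sq⁻¹ * (1 + τ₀ * s ^ 2) = s * cosh s / sinh s
  have hkey : c0sq⁻¹ * (1 + τ₀ * s ^ 2) = s * Real.cosh s / Real.sinh s := by
    have : c0sq⁻¹ * (1 + τ₀ * s ^ 2) = c0sq⁻¹ + (c0sq⁻¹ * τ₀) * s ^ 2 := by ring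
    rw [this, hB, hcinv, htanh]
    field_simp
    ring
  constructor
  · show c0sq⁻¹ * (1 + τ₀ * s ^ 2) * Real.sinh s - s * Real.cosh s = 0
    rw [hkey]; field_simp; ring
  · have hD : HasDerivAt (fun ξ : ℝ => c0sq⁻¹ * (1 + τ₀ * ξ ^ 2) * Real.sinh ξ - ξ * Real.cosh ξ)
        ((c0sq⁻¹ * (τ₀ * (2 * s ^ 1))) * Real.sinh s
          + c0sq⁻¹ * (1 + τ₀ * s ^ 2) * Real.cosh s
          - (1 * Real.cosh s + s * Real.sinh s)) s := by
      exact ((((((hasDerivAt_pow 2 s).const_mul τ₀).const_add 1).const_mul c0sq⁻¹).mul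
        (Real.hasDerivAt_sinh s)).sub ((hasDerivAt_id' s).mul (Real.hasDerivAt_cosh s)))
    rw [hD.deriv]
    have h2 : c0sq⁻¹ * (τ₀ * (2 * s ^ 1)) = 2 * s * (c0sq⁻¹ * τ₀) := by ring
    rw [h2, hB, hkey, htanh]
    field_simp
    linear_combination s * hid
end
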